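/- arXiv:2301.01116 — 2 statements merged into one kernel-verified Lean document; each statement's English description precedes it below -/
import Mathlib

section
/- Let 1 < a < b be integers and let T be i.i.d. over {a,b} with P(T_n = a) = p ∈ (0,1), X = O_T. Then for all n ≥ b + 1, P(X_n = a) = p exactly. -/
def dirStep (X : List ℕ) (k t : ℕ) : List ℕ :=
  let X' := X ++ [t]
  X' ++ List.replicate (X'.getD k 1 - 1) t

/-- The word directed by the finite directing word `T`: at step `i` (0-indexed),
append `t_i` followed by `X[i] - 1` further copies of `t_i`. -/
def dirWord (T : List ℕ) : List ℕ :=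
  (T.foldl (fun p t => (dirStep p.1 p.2 t, p.2 + 1)) (([] : List ℕ), 0)).1

/-- The `n`-th letter (1-indexed) of the infinite sequence directed by `T`
(whose meaningful indices are `1, 2, …`). -/
def dirSeq (T : ℕ → ℕ) (n : ℕ) : ℕ :=
  (dirWord (List.ofFn fun i : Fin n => T (i + 1))).getD (n - 1) 0

/-!
Let block `i + 1` of `X = O_T` be the one containing position `n`. All letters are at least `2`
and `n > b ≥ T₁`, so this is not the first block, and then its length is one of the letters
already written by the first `i` blocks. Hence the event "`n` lies in block `i + 1`" is determined
by `T₁, …, Tᵢ` and is independent of `T_{i+1}`, which is the value of `X_n` on that event. Each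
block thus contributes `P(n lies in block i + 1) · p`, and these events partition `Ω` a.s.
-/

open MeasureTheory ProbabilityTheory
open scoped Function

lemma dirStep_eq_append_replicate (X : List ℕ) (k x : ℕ) :
    dirStep X k x = X ++ List.replicate ((X ++ [x]).getD k 1 - 1 + 1) x := by
  simp [dirStep, List.replicate_succ, List.append_assoc]

lemma snd_foldl_dirStep (T X : List ℕ) (k : ℕ) :
    (T.foldl (fun p t => (dirStep p.1 p.2 t, p.2 + 1)) (X, k)).2 = k + T.length := by
  induction T generalizing X k with
  | nil => rfl
  | cons x T ih => simp only [List.foldl_cons, ih, List.length_cons]; omega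

lemma dirWord_append_singleton (T : List ℕ) (x : ℕ) :
    dirWord (T ++ [x]) = dirStep (dirWord T) T.length x := by
  simp only [dirWord, List.foldl_append, List.foldl_cons, List.foldl_nil, snd_foldl_dirStep,
    zero_add]

def dirPrefix (t : ℕ → ℕ) (i : ℕ) : List ℕ :=
  dirWord (List.ofFn fun j : Fin i => t (j + 1))

section dirPrefix

variable (t : ℕ → ℕ)

lemma dirSeq_eq_getD_dirPrefix (n : ℕ) : dirSeq t n = (dirPrefix t n).getD (n - 1) 0 := rfl

@[simp]
lemma dirPrefix_zero : dirPrefix t 0 = [] := rfl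

lemma dirPrefix_succ (i : ℕ) : dirPrefix t (i + 1) = dirStep (dirPrefix t i) i (t (i + 1)) := by
  rw [dirPrefix, List.ofFn_succ', List.concat_eq_append, dirWord_append_singleton,
    List.length_ofFn]
  rfl

lemma length_dirPrefix_succ (i : ℕ) :
    (dirPrefix t (i + 1)).length =
      (dirPrefix t i).length + ((dirPrefix t i ++ [t (i + 1)]).getD i 1 - 1 + 1) := by
  rw [dirPrefix_succ, dirStep_eq_append_replicate, List.length_append, List.length_replicate]

lemma length_dirPrefix_one : (dirPrefix t 1).length = t 1 - 1 + 1 := by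
  simp [length_dirPrefix_succ t 0]

lemma strictMono_length_dirPrefix : StrictMono fun i => (dirPrefix t i).length :=
  strictMono_nat_of_lt_succ fun i => by rw [length_dirPrefix_succ]; omega

lemma le_length_dirPrefix (i : ℕ) : i ≤ (dirPrefix t i).length :=
  (strictMono_length_dirPrefix t).id_le i

lemma dirPrefix_isPrefix_of_le {i j : ℕ} (h : i ≤ j) : dirPrefix t i <+: dirPrefix t j := by
  induction j, h using Nat.le_induction with
  | base => exact List.prefix_refl _
  | succ j _ ih =>
    rw [dirPrefix_succ, dirStep_eq_append_replicate]
    exact ih.trans (List.prefix_append _ _)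

lemma dirSeq_eq_of_mem_Ioc {n i : ℕ}
    (h : n ∈ Set.Ioc (dirPrefix t i).length (dirPrefix t (i + 1)).length) :
    dirSeq t n = t (i + 1) := by
  obtain ⟨hlo, hhi⟩ := h
  obtain ⟨r, hr⟩ := dirPrefix_isPrefix_of_le t
    (show i + 1 ≤ n from (le_length_dirPrefix t i).trans_lt hlo)
  rw [dirSeq_eq_getD_dirPrefix, ← hr, List.getD_append _ _ _ _ (by omega), dirPrefix_succ,
    dirStep_eq_append_replicate, List.getD_append_right _ _ _ _ (by omega)]
  rw [length_dirPrefix_succ] at hhi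
  exact List.getD_replicate _ (by omega)

lemma exists_eq_of_mem_dirPrefix {i x : ℕ} (hx : x ∈ dirPrefix t i) :
    ∃ k, 1 ≤ k ∧ k ≤ i ∧ t k = x := by
  induction i with
  | zero => simp [dirPrefix, dirWord] at hx
  | succ i ih =>
    rw [dirPrefix_succ, dirStep_eq_append_replicate, List.mem_append, List.mem_replicate] at hx
    rcases hx with hx | ⟨-, rfl⟩
    · obtain ⟨k, hk1, hki, hkx⟩ := ih hx
      exact ⟨k, hk1, by omega, hkx⟩
    · exact ⟨i + 1, by omega, le_rfl, rfl⟩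

lemma two_mul_le_length_dirPrefix {i : ℕ} (ht : ∀ k, 1 ≤ k → k ≤ i → 2 ≤ t k) :
    2 * i ≤ (dirPrefix t i).length := by
  induction i with
  | zero => simp
  | succ i ih =>
    have hi : i < (dirPrefix t i ++ [t (i + 1)]).length := by
      simpa [Nat.lt_succ_iff] using le_length_dirPrefix t i
    have hblock : 2 ≤ (dirPrefix t i ++ [t (i + 1)]).getD i 1 := by
      rw [List.getD_eq_getElem _ _ hi]
      rcases List.mem_append.1 (List.getElem_mem hi) with hx | hx
      · obtain ⟨k, hk1, hki, hkx⟩ := exists_eq_of_mem_dirPrefix t hx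
        rw [← hkx]
        exact ht k hk1 (by omega)
      · rw [List.mem_singleton.1 hx]
        exact ht (i + 1) (by omega) le_rfl
    have := ih fun k hk1 hki => ht k hk1 (by omega)
    rw [length_dirPrefix_succ]
    omega

end dirPrefix

lemma dirPrefix_dependsOn (i : ℕ) : DependsOn (dirPrefix · i) (Finset.Icc 1 i : Set ℕ) :=
  fun _ _ h => congrArg dirWord (List.ofFn_inj.2 (funext fun j => h _ (by simp)))

lemma dirSeq_dependsOn (n : ℕ) : DependsOn (dirSeq · n) (Finset.Icc 1 n : Set ℕ) :=
  fun _ _ h => congrArg (List.getD · (n - 1) 0) (dirPrefix_dependsOn n h)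

/-- The clause `i < |dirPrefix t i|` says that the length of block `i + 1` was already written by
the first `i` blocks, so that the event depends on `t 1, …, t i` only. -/
def InDeterminedBlock (t : ℕ → ℕ) (n i : ℕ) : Prop :=
  i < (dirPrefix t i).length ∧ n ∈ Set.Ioc (dirPrefix t i).length (dirPrefix t (i + 1)).length

namespace InDeterminedBlock

variable {t : ℕ → ℕ} {n i : ℕ}

lemma iff_getD : InDeterminedBlock t n i ↔ i < (dirPrefix t i).length ∧
    n ∈ Set.Ioc (dirPrefix t i).length
      ((dirPrefix t i).length + ((dirPrefix t i).getD i 1 - 1 + 1)) :=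
  and_congr_right fun h => by rw [length_dirPrefix_succ, List.getD_append _ _ _ _ h]

lemma dependsOn (n i : ℕ) :
    DependsOn (InDeterminedBlock · n i) (Finset.Icc 1 i : Set ℕ) := fun _ _ h => by
  simp only [iff_getD, dirPrefix_dependsOn i h]

lemma dirSeq_eq (h : InDeterminedBlock t n i) : dirSeq t n = t (i + 1) :=
  dirSeq_eq_of_mem_Ioc t h.2

lemma unique {j : ℕ} (hi : InDeterminedBlock t n i) (hj : InDeterminedBlock t n j) : i = j := by
  by_contra hij
  exact Set.disjoint_left.1
    ((strictMono_length_dirPrefix t).monotone.pairwise_disjoint_on_Ioc_succ hij) hi.2 hj.2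

end InDeterminedBlock

lemma exists_inDeterminedBlock {t : ℕ → ℕ} {n : ℕ} (ht : ∀ k, 1 ≤ k → 2 ≤ t k) (hn : t 1 < n) :
    ∃ i, InDeterminedBlock t n i := by
  have hmem : n ∈ Set.Ioc (dirPrefix t 0).length (dirPrefix t n).length :=
    ⟨by simp; omega, le_length_dirPrefix t n⟩
  obtain ⟨i, -, hi⟩ :=
    Set.mem_iUnion₂.1 (Ioc_subset_biUnion_Ioc n (fun i => (dirPrefix t i).length) hmem)
  refine ⟨i, ?_, hi⟩
  have hi0 : i ≠ 0 := by
    rintro rfl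
    have := hi.2
    rw [length_dirPrefix_one] at this
    have := ht 1 le_rfl
    omega
  have := two_mul_le_length_dirPrefix t (i := i) fun k hk _ => ht k hk
  omega

section Probability

variable {Ω ι β γ : Type*} [MeasurableSpace Ω] [MeasurableSpace β] [Countable β]
  [MeasurableSingletonClass β] [MeasurableSpace γ] [Nonempty γ] {X : ι → Ω → β}

lemma measurable_comp_of_dependsOn (hX : ∀ i, Measurable (X i)) {f : (ι → β) → γ}
    {s : Finset ι} (hf : DependsOn f s) : Measurable fun ω => f (X · ω) := by
  obtain ⟨g, rfl⟩ := dependsOn_iff_exists_comp.1 hf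
  exact (measurable_of_countable g).comp (measurable_pi_lambda _ fun i => hX i)

lemma ProbabilityTheory.iIndepFun.indepFun_of_dependsOn {μ : Measure Ω} (hind : iIndepFun X μ)
    (hX : ∀ i, Measurable (X i)) {f : (ι → β) → γ} {s : Finset ι} (hf : DependsOn f s) {j : ι}
    (hj : j ∉ s) : IndepFun (fun ω => f (X · ω)) (X j) μ := by
  classical
  obtain ⟨g, rfl⟩ := dependsOn_iff_exists_comp.1 hf
  exact (hind.indepFun_finset s {j} (Finset.disjoint_singleton_right.2 hj) hX).comp
    (measurable_of_countable g)
    (measurable_pi_apply (⟨j, Finset.mem_singleton_self j⟩ : ({j} : Finset ι)))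

end Probability

lemma measure_dirSeq_inter_inDeterminedBlock {Ω : Type*} [MeasurableSpace Ω] {μ : Measure Ω}
    {T : ℕ → Ω → ℕ} (hind : iIndepFun T μ) (hT : ∀ k, Measurable (T k)) (n i x : ℕ) :
    μ ({ω | dirSeq (T · ω) n = x} ∩ {ω | InDeterminedBlock (T · ω) n i}) =
      μ {ω | InDeterminedBlock (T · ω) n i} * μ {ω | T (i + 1) ω = x} := by
  have hblock : {ω | dirSeq (T · ω) n = x} ∩ {ω | InDeterminedBlock (T · ω) n i} =
      {ω | InDeterminedBlock (T · ω) n i} ∩ T (i + 1) ⁻¹' {x} :=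
    Set.ext fun _ => ⟨fun ⟨hX, hE⟩ => ⟨hE, hE.dirSeq_eq.symm.trans hX⟩,
      fun ⟨hE, hT⟩ => ⟨hE.dirSeq_eq.trans hT, hE⟩⟩
  rw [hblock]
  exact (hind.indepFun_of_dependsOn hT (InDeterminedBlock.dependsOn n i) (j := i + 1)
    (by simp)).measure_inter_preimage_eq_mul {P | P} {x}
    (measurableSet_setOfPred.2 measurable_id) (measurableSet_singleton x)

lemma ae_eq_or_eq_of_measure_add_eq_one {Ω β : Type*} [MeasurableSpace Ω] [MeasurableSpace β]
    [MeasurableSingletonClass β] {μ : Measure Ω} [IsProbabilityMeasure μ] {Y : Ω → β}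
    (hY : Measurable Y) {a b : β} (hab : a ≠ b)
    (h : μ {ω | Y ω = a} + μ {ω | Y ω = b} = 1) : ∀ᵐ ω ∂μ, Y ω = a ∨ Y ω = b := by
  have hmeas : MeasurableSet {ω | Y ω = a ∨ Y ω = b} :=
    (hY (measurableSet_singleton a)).union (hY (measurableSet_singleton b))
  rw [ae_iff_measure_eq hmeas.nullMeasurableSet, measure_univ, Set.ofPred_or,
    measure_union (s₂ := {ω | Y ω = b}) _ (hY (measurableSet_singleton b)), h]
  exact Set.disjoint_left.2 fun ω ha hb => hab (ha.symm.trans hb)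

lemma measure_eq_of_ae_partition {Ω ι : Type*} [MeasurableSpace Ω] [Countable ι]
    {μ : Measure Ω} [IsProbabilityMeasure μ] {E : ι → Set Ω} (hE : ∀ i, MeasurableSet (E i))
    (hdisj : Pairwise (Disjoint on E)) (hcover : ∀ᵐ ω ∂μ, ∃ i, ω ∈ E i)
    {A : Set Ω} (hA : MeasurableSet A) {c : ENNReal} (hAE : ∀ i, μ (A ∩ E i) = μ (E i) * c) :
    μ A = c := by
  have hnull : μ (⋃ i, E i)ᶜ = 0 := mem_ae_iff.1 (hcover.mono fun _ => Set.mem_iUnion.2)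
  calc μ A = μ (A ∩ ⋃ i, E i) := (measure_inter_conull hnull).symm
    _ = ∑' i, μ (A ∩ E i) := by
      rw [Set.inter_iUnion]
      exact measure_iUnion
        (fun i j hij => (hdisj hij).mono Set.inter_subset_right Set.inter_subset_right)
        fun i => hA.inter (hE i)
    _ = μ (⋃ i, E i) * c := by simp_rw [hAE, ENNReal.tsum_mul_right, measure_iUnion hdisj hE]
    _ = c := by rw [(prob_compl_eq_zero_iff (MeasurableSet.iUnion hE)).1 hnull, one_mul]

/-- over the alphabet {a,b} with 1 < a < b, for an i.i.d.
directing sequence with P(T_n = a) = p ∈ (0,1) and P(T_n = b) = 1 - p,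
for all n ≥ b + 1, P(X_n = a) = p. -/
theorem stmt15 {Ω : Type*} [MeasurableSpace Ω] (μ : Measure Ω)
    [IsProbabilityMeasure μ] (a b : ℕ) (ha : 1 < a) (hab : a < b)
    (p : ℝ) (hp : p ∈ Set.Ioo (0 : ℝ) 1)
    (T : ℕ → Ω → ℕ) (hmeas : ∀ n, Measurable (T n))
    (hindep : iIndepFun T μ)
    (h1 : ∀ n, 1 ≤ n → μ {ω | T n ω = a} = ENNReal.ofReal p)
    (h2 : ∀ n, 1 ≤ n → μ {ω | T n ω = b} = ENNReal.ofReal (1 - p)) :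
    ∀ n, b + 1 ≤ n →
      μ {ω | dirSeq (fun k => T k ω) n = a} = ENNReal.ofReal p := by
  intro n hn
  have hletters : ∀ᵐ ω ∂μ, ∀ k, 1 ≤ k → T k ω = a ∨ T k ω = b := by
    refine ae_all_iff.2 fun k => Filter.eventually_imp_distrib_left.2 fun hk => ?_
    refine ae_eq_or_eq_of_measure_add_eq_one (hmeas k) hab.ne ?_
    rw [h1 k hk, h2 k hk, ← ENNReal.ofReal_add hp.1.le (by linarith [hp.2]), add_sub_cancel,
      ENNReal.ofReal_one]
  refine measure_eq_of_ae_partition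
    (E := fun i => {ω | InDeterminedBlock (fun k => T k ω) n i})
    (fun i => measurableSet_setOfPred.2
      (measurable_comp_of_dependsOn hmeas (InDeterminedBlock.dependsOn n i)))
    (fun i j hij => Set.disjoint_left.2 fun ω hi hj => hij (InDeterminedBlock.unique hi hj))
    ?_ ?_ fun i => ?_
  · filter_upwards [hletters] with ω hω
    exact exists_inDeterminedBlock (fun k hk => by rcases hω k hk with h | h <;> omega)
      (by rcases hω 1 le_rfl with h | h <;> omega)
  · exact measurable_comp_of_dependsOn hmeas (dirSeq_dependsOn n) (measurableSet_singleton a)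
  · exact (measure_dirSeq_inter_inDeterminedBlock hindep hmeas n i a).trans
      (congrArg _ (h1 (i + 1) (by omega)))
end

section
/- For the simultaneously constructed sequences T and O_T of the previous construction, if the density of 1's in T exists, then neither T nor O_T is eventually periodic, since their letter densities (1 + √17)/8 and (7 − √17)/4 are irrational. -/
/-- One step of the simultaneous construction (Program 2): if the current
(0-indexed) `i`-th letter of `O` is 2 the corresponding block is filled with
1,1; otherwise it is a block of size 1 filled with the alternating digit `d`. -/
def simStep : List ℕ × List ℕ × ℕ → ℕ → List ℕ × List ℕ × ℕ
  | (t, o, d), i =>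
    if o.getD i 0 = 2 then (t ++ [1], o ++ [1, 1], d)
    else (t ++ [d], o ++ [d], 3 - d)

/-- State (T, O, next alternating digit) after `n` loop iterations, starting
from T = (2), O = 2,2, d = 1. -/
def simState : ℕ → List ℕ × List ℕ × ℕ
  | 0 => ([2], [2, 2], 1)
  | n + 1 => simStep (simState n) (n + 1)

/-- The n-th letter (1-indexed) of the directing sequence T of the
simultaneous construction. -/
def simT (n : ℕ) : ℕ := (simState n).1.getD (n - 1) 0

/-- The n-th letter (1-indexed) of the directed sequence O_T of the
simultaneous construction. -/
def simO (n : ℕ) : ℕ := (simState n).2.1.getD (n - 1) 0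

/-- Frequency of 1's among the first n letters of f (read at indices 1,…,n). -/
noncomputable def freqOnes (f : ℕ → ℕ) (n : ℕ) : ℝ :=
  ((Finset.Icc 1 n).filter (fun k => f k = 1)).card / n

/-!
Write `b m` and `u m` for the numbers of `2`s among `O_1, …, O_m` and of `1`s among
`T_1, …, T_m`. The first `m` blocks of `O` have total length `m + b m`; apart from the first
block `2, 2`, the only `2`s in them come from the `m - b m` blocks of size one, which are filled
alternately with `1` and `2`. Counting gives, with an error `e ∈ {0, 1}`,
`2 b(m + b m) + b m + e = m + 4` and `2 u m + 2 = b m + m + e`.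
So if `u m / m → d`, then `b m / m → β = 2d - 1` and `2β(1 + β) + β = 1`, whence
`β = (√17 - 3) / 4` is irrational; but an eventually periodic sequence has rational letter
densities.
-/

open Finset Filter Topology

theorem List.IsPrefix.getD_eq {α : Type*} {l₁ l₂ : List α} (h : l₁ <+: l₂) {i : ℕ}
    (hi : i < l₁.length) (d : α) : l₂.getD i d = l₁.getD i d := by
  obtain ⟨t, rfl⟩ := h
  exact List.getD_append _ _ _ _ hi

def letterCount {α : Type*} [DecidableEq α] (f : ℕ → α) (a : α) (m : ℕ) : ℕ :=
  #{k ∈ Icc 1 m | f k = a}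

lemma letterCount_succ {α : Type*} [DecidableEq α] (f : ℕ → α) (a : α) (m : ℕ) :
    letterCount f a (m + 1) = letterCount f a m + if f (m + 1) = a then 1 else 0 := by
  rw [letterCount, ← insert_Icc_right_eq_Icc_add_one (by omega), filter_insert]
  split
  · exact card_insert_of_notMem (by simp)
  · rfl

lemma letterCount_succ_of_eq {α : Type*} [DecidableEq α] {f : ℕ → α} {a : α} {m : ℕ}
    (h : f (m + 1) = a) : letterCount f a (m + 1) = letterCount f a m + 1 := by
  simp [letterCount_succ, h]

lemma letterCount_succ_of_ne {α : Type*} [DecidableEq α] {f : ℕ → α} {a : α} {m : ℕ}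
    (h : f (m + 1) ≠ a) : letterCount f a (m + 1) = letterCount f a m := by
  simp [letterCount_succ, h]

section Periodic

variable {α : Type*} [DecidableEq α] {f : ℕ → α} {a : α} {P N : ℕ}

lemma letterCount_add_period (hper : ∀ n, N ≤ n → f (n + P) = f n) {m : ℕ} (hm : N ≤ m) :
    letterCount f a (m + P) + letterCount f a N = letterCount f a m + letterCount f a (N + P) := by
  induction m, hm using Nat.le_induction with
  | base => exact add_comm _ _
  | succ m hm ih =>
    rw [show m + 1 + P = m + P + 1 by ring, letterCount_succ f a (m + P), letterCount_succ f a m,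
      show m + P + 1 = m + 1 + P by ring, hper (m + 1) (by omega)]
    omega

lemma letterCount_add_mul_period (hper : ∀ n, N ≤ n → f (n + P) = f n) (k : ℕ) :
    letterCount f a (N + k * P) + k * letterCount f a N
      = letterCount f a N + k * letterCount f a (N + P) := by
  induction k with
  | zero => simp
  | succ k ih =>
    have := letterCount_add_period (a := a) hper (m := N + k * P) (by omega)
    rw [show N + (k + 1) * P = N + k * P + P by ring]
    linarith

lemma exists_rat_eq_of_tendsto_letterCount_div (hP : 1 ≤ P)
    (hper : ∀ n, N ≤ n → f (n + P) = f n) {L : ℝ}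
    (hL : Tendsto (fun m => (letterCount f a m : ℝ) / m) atTop (𝓝 L)) :
    ∃ q : ℚ, (q : ℝ) = L := by
  set c : ℝ := letterCount f a (N + P) - letterCount f a N
  have hlin (k : ℕ) : (letterCount f a (N + k * P) : ℝ) = letterCount f a N + k * c := by
    have := letterCount_add_mul_period (a := a) hper k
    have : (letterCount f a (N + k * P) : ℝ) + k * letterCount f a N
        = letterCount f a N + k * letterCount f a (N + P) := by exact_mod_cast this
    linarith
  have hsub : Tendsto (fun k : ℕ => N + k * P) atTop atTop :=
    tendsto_atTop_mono (fun k => le_add_left (Nat.le_mul_of_pos_right k hP)) tendsto_id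
  have hP' : (P : ℝ) ≠ 0 := by positivity
  have hlim : Tendsto (fun k => c / P + (letterCount f a N - c * N / P) / ((N + k * P : ℕ) : ℝ))
      atTop (𝓝 (c / P)) := by
    simpa using (tendsto_const_nhds (x := c / P)).add
      ((tendsto_const_div_atTop_nhds_zero_nat (letterCount f a N - c * N / P)).comp hsub)
  refine ⟨(letterCount f a (N + P) - letterCount f a N : ℚ) / P, ?_⟩
  push_cast
  refine tendsto_nhds_unique (hlim.congr' ?_) (hL.comp hsub)
  filter_upwards [eventually_ge_atTop 1] with k hk
  have : ((N + k * P : ℕ) : ℝ) ≠ 0 := by positivity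
  simp only [Function.comp_apply, hlin]
  field_simp
  push_cast
  ring

end Periodic

lemma tendsto_div_of_abs_sub_le {x y : ℕ → ℝ} {C L : ℝ}
    (hC : ∀ᶠ m in atTop, |x m - y m| ≤ C)
    (hy : Tendsto (fun m => y m / m) atTop (𝓝 L)) :
    Tendsto (fun m => x m / m) atTop (𝓝 L) := by
  have hdiff : Tendsto (fun m => (x m - y m) / m) atTop (𝓝 0) := by
    refine squeeze_zero_norm' ?_ (tendsto_const_div_atTop_nhds_zero_nat C)
    filter_upwards [hC] with m hm
    rw [norm_div, Real.norm_natCast, Real.norm_eq_abs]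
    exact div_le_div_of_nonneg_right hm m.cast_nonneg
  simpa using (hy.add hdiff).congr fun m => by ring

lemma irrational_of_two_mul_sq_add_three_mul_eq_one {x : ℝ} (h : 2 * x ^ 2 + 3 * x = 1) :
    Irrational x := by
  rintro ⟨q, rfl⟩
  have hq : (17 : ℚ) = (4 * q + 3) * (4 * q + 3) := by
    exact_mod_cast (by linear_combination -8 * h : (17 : ℝ) = (4 * q + 3) * (4 * q + 3))
  exact (by norm_num : ¬IsSquare (17 : ℚ)) ⟨_, hq⟩

lemma simStep_apply (s : List ℕ × List ℕ × ℕ) (i : ℕ) :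
    simStep s i = if s.2.1.getD i 0 = 2 then (s.1 ++ [1], s.2.1 ++ [1, 1], s.2.2)
      else (s.1 ++ [s.2.2], s.2.1 ++ [s.2.2], 3 - s.2.2) := rfl

lemma length_simState_fst (n : ℕ) : (simState n).1.length = n + 1 := by
  induction n with
  | zero => rfl
  | succ n ih => rw [simState, simStep_apply]; split <;> simp [ih]

lemma add_two_le_length_simState_snd (n : ℕ) : n + 2 ≤ (simState n).2.1.length := by
  induction n with
  | zero => simp [simState]
  | succ n ih => rw [simState, simStep_apply]; split <;> simp <;> omega

lemma simState_prefix_succ (n : ℕ) :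
    (simState n).1 <+: (simState (n + 1)).1 ∧ (simState n).2.1 <+: (simState (n + 1)).2.1 := by
  rw [simState, simStep_apply]; split <;> simp

lemma simState_fst_prefix {n m : ℕ} (h : n ≤ m) : (simState n).1 <+: (simState m).1 := by
  induction m, h using Nat.le_induction with
  | base => exact List.prefix_refl _
  | succ m _ ih => exact ih.trans (simState_prefix_succ m).1

lemma simState_snd_prefix {n m : ℕ} (h : n ≤ m) : (simState n).2.1 <+: (simState m).2.1 := by
  induction m, h using Nat.le_induction with
  | base => exact List.prefix_refl _
  | succ m _ ih => exact ih.trans (simState_prefix_succ m).2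

lemma simT_eq_getD {n i : ℕ} (hi : 1 ≤ i) (hin : i ≤ n + 1) :
    simT i = (simState n).1.getD (i - 1) 0 := by
  rcases le_total i n with h | h
  · exact ((simState_fst_prefix h).getD_eq (by rw [length_simState_fst]; omega) 0).symm
  · exact (simState_fst_prefix h).getD_eq (by rw [length_simState_fst]; omega) 0

lemma simO_eq_getD {n i : ℕ} (hi : 1 ≤ i) (hin : i ≤ (simState n).2.1.length) :
    simO i = (simState n).2.1.getD (i - 1) 0 := by
  rcases le_total i n with h | h
  · have := add_two_le_length_simState_snd i
    exact ((simState_snd_prefix h).getD_eq (by omega) 0).symm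
  · exact (simState_snd_prefix h).getD_eq (by omega) 0

/-- Step `n + 1` reads `O_{n+2}`, at position `n + 1` of the 0-indexed list. -/
lemma simState_succ (n : ℕ) : simState (n + 1) =
    if simO (n + 2) = 2 then
      ((simState n).1 ++ [1], (simState n).2.1 ++ [1, 1], (simState n).2.2)
    else ((simState n).1 ++ [(simState n).2.2], (simState n).2.1 ++ [(simState n).2.2],
      3 - (simState n).2.2) := by
  rw [simState, simStep_apply, simO_eq_getD (n := n) (by omega) (add_two_le_length_simState_snd n)]
  rfl

lemma simState_step_of_simO_eq_two {n : ℕ} (h : simO (n + 2) = 2) :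
    simT (n + 2) = 1 ∧ (simState (n + 1)).2.1.length = (simState n).2.1.length + 2 ∧
      (simState (n + 1)).2.2 = (simState n).2.2 ∧
      simO ((simState n).2.1.length + 1) = 1 ∧ simO ((simState n).2.1.length + 2) = 1 := by
  have hs := simState_succ n
  rw [if_pos h] at hs
  have hL : (simState (n + 1)).2.1.length = (simState n).2.1.length + 2 := by simp [hs]
  refine ⟨?_, hL, by rw [hs], ?_, ?_⟩
  · rw [simT_eq_getD (n := n + 1) (by omega) le_rfl, hs]
    simp [length_simState_fst]
  · rw [simO_eq_getD (n := n + 1) (by omega) (by omega), hs]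
    simp
  · rw [simO_eq_getD (n := n + 1) (by omega) (by omega), hs]
    simp

lemma simState_step_of_simO_eq_one {n : ℕ} (h : simO (n + 2) = 1) :
    simT (n + 2) = (simState n).2.2 ∧
      (simState (n + 1)).2.1.length = (simState n).2.1.length + 1 ∧
      (simState (n + 1)).2.2 = 3 - (simState n).2.2 ∧
      simO ((simState n).2.1.length + 1) = (simState n).2.2 := by
  have hs := simState_succ n
  rw [if_neg (by omega)] at hs
  have hL : (simState (n + 1)).2.1.length = (simState n).2.1.length + 1 := by simp [hs]
  refine ⟨?_, hL, by rw [hs], ?_⟩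
  · rw [simT_eq_getD (n := n + 1) (by omega) le_rfl, hs]
    simp [length_simState_fst]
  · rw [simO_eq_getD (n := n + 1) (by omega) (by omega), hs]
    simp

lemma simState_letters (n : ℕ) : (∀ x ∈ (simState n).2.1, x = 1 ∨ x = 2) ∧
    ((simState n).2.2 = 1 ∨ (simState n).2.2 = 2) := by
  induction n with
  | zero => simp [simState]
  | succ n ih =>
    obtain ⟨hO, hd⟩ := ih
    rw [simState, simStep_apply]
    split
    · exact ⟨by simpa [or_imp, forall_and] using hO, hd⟩
    · refine ⟨by simpa [or_imp, forall_and, hd] using hO, ?_⟩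
      dsimp only
      omega

lemma simO_eq_one_or_two {i : ℕ} (hi : 1 ≤ i) : simO i = 1 ∨ simO i = 2 := by
  have hlen : i - 1 < (simState i).2.1.length := by
    have := add_two_le_length_simState_snd i; omega
  rw [simO, List.getD_eq_getElem?_getD, List.getElem?_eq_getElem hlen]
  exact (simState_letters i).1 _ (List.getElem_mem hlen)

lemma letterCount_simO_one_add_two (m : ℕ) :
    letterCount simO 1 m + letterCount simO 2 m = m := by
  induction m with
  | zero => rfl
  | succ m ih =>
    rcases simO_eq_one_or_two (i := m + 1) (by omega) with h | h
    · rw [letterCount_succ_of_eq h, letterCount_succ_of_ne (ne_of_eq_of_ne h (by decide))]; omega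
    · rw [letterCount_succ_of_ne (ne_of_eq_of_ne h (by decide)), letterCount_succ_of_eq h]; omega

lemma length_simState_snd (n : ℕ) :
    (simState n).2.1.length = n + 1 + letterCount simO 2 (n + 1) := by
  induction n with
  | zero => decide
  | succ n ih =>
    rcases simO_eq_one_or_two (i := n + 2) (by omega) with h | h
    · rw [(simState_step_of_simO_eq_one h).2.1,
        letterCount_succ_of_ne (m := n + 1) (ne_of_eq_of_ne h (by decide))]
      omega
    · rw [(simState_step_of_simO_eq_two h).2.1, letterCount_succ_of_eq (m := n + 1) h]; omega

/-- The blocks of size one are filled alternately with `1, 2, 1, …`, and their number is the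
number of `1`s in `O`, since `O_1 = 2`. -/
lemma simState_digit (n : ℕ) :
    (simState n).2.2 = 1 + letterCount simO 1 (n + 1) % 2 := by
  induction n with
  | zero => decide
  | succ n ih =>
    rcases simO_eq_one_or_two (i := n + 2) (by omega) with h | h
    · rw [(simState_step_of_simO_eq_one h).2.2.1, letterCount_succ_of_eq (m := n + 1) h]; omega
    · rw [(simState_step_of_simO_eq_two h).2.2.1,
        letterCount_succ_of_ne (m := n + 1) (ne_of_eq_of_ne h (by decide))]
      exact ih

lemma letterCount_simO_two_length_simState_snd (n : ℕ) :
    letterCount simO 2 (simState n).2.1.length = 2 + letterCount simO 1 (n + 1) / 2 := by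
  induction n with
  | zero => decide
  | succ n ih =>
    have hd := simState_digit n
    rcases simO_eq_one_or_two (i := n + 2) (by omega) with h | h
    · obtain ⟨-, hL, -, hO⟩ := simState_step_of_simO_eq_one h
      rw [hL, letterCount_succ, hO, letterCount_succ_of_eq (m := n + 1) h]
      split_ifs <;> omega
    · obtain ⟨-, hL, -, hO₁, hO₂⟩ := simState_step_of_simO_eq_two h
      rw [hL, letterCount_succ_of_ne (m := _ + 1) (ne_of_eq_of_ne hO₂ (by decide)),
        letterCount_succ_of_ne (ne_of_eq_of_ne hO₁ (by decide)),
        letterCount_succ_of_ne (m := n + 1) (ne_of_eq_of_ne h (by decide))]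
      exact ih

lemma letterCount_simT_one (n : ℕ) :
    letterCount simT 1 (n + 1) + 1 + letterCount simO 1 (n + 1) / 2
      = letterCount simO 2 (n + 1) + letterCount simO 1 (n + 1) := by
  induction n with
  | zero => decide
  | succ n ih =>
    have hd := simState_digit n
    rcases simO_eq_one_or_two (i := n + 2) (by omega) with h | h
    · rw [letterCount_succ simT 1 (n + 1), (simState_step_of_simO_eq_one h).1,
        letterCount_succ_of_eq (m := n + 1) h,
        letterCount_succ_of_ne (m := n + 1) (ne_of_eq_of_ne h (by decide))]
      split_ifs <;> omega
    · rw [letterCount_succ_of_eq (m := n + 1) (simState_step_of_simO_eq_two h).1,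
        letterCount_succ_of_ne (m := n + 1) (ne_of_eq_of_ne h (by decide)),
        letterCount_succ_of_eq (m := n + 1) h]
      omega

lemma letterCount_simO_two_add_self {m : ℕ} (hm : 1 ≤ m) :
    ∃ e ≤ 1, 2 * letterCount simO 2 (m + letterCount simO 2 m) + letterCount simO 2 m + e
      = m + 4 := by
  obtain ⟨n, rfl⟩ : ∃ n, m = n + 1 := ⟨m - 1, by omega⟩
  have hL := length_simState_snd n
  have hb := letterCount_simO_two_length_simState_snd n
  have hw := letterCount_simO_one_add_two (n + 1)
  rw [← hL]
  exact ⟨letterCount simO 1 (n + 1) % 2, by omega, by omega⟩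

lemma two_mul_letterCount_simT_one {m : ℕ} (hm : 1 ≤ m) :
    ∃ e ≤ 1, 2 * letterCount simT 1 m + 2 = letterCount simO 2 m + m + e := by
  obtain ⟨n, rfl⟩ : ∃ n, m = n + 1 := ⟨m - 1, by omega⟩
  have hu := letterCount_simT_one n
  have hw := letterCount_simO_one_add_two (n + 1)
  exact ⟨letterCount simO 1 (n + 1) % 2, by omega, by omega⟩

lemma tendsto_letterCount_simO_two_div {d : ℝ}
    (h : Tendsto (fun m => (letterCount simT 1 m : ℝ) / m) atTop (𝓝 d)) :
    Tendsto (fun m => (letterCount simO 2 m : ℝ) / m) atTop (𝓝 (2 * d - 1)) := by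
  refine tendsto_div_of_abs_sub_le (y := fun m => 2 * (letterCount simT 1 m : ℝ) - m) (C := 2)
    ?_ ?_
  · filter_upwards [eventually_ge_atTop 1] with m hm
    obtain ⟨e, he, hid⟩ := two_mul_letterCount_simT_one hm
    have he' : (e : ℝ) ≤ 1 := by exact_mod_cast he
    have hid' : 2 * (letterCount simT 1 m : ℝ) + 2 = letterCount simO 2 m + m + e := by
      exact_mod_cast hid
    rw [abs_le]
    constructor <;> linarith [e.cast_nonneg (α := ℝ)]
  · refine ((h.const_mul 2).sub_const 1).congr' ?_
    filter_upwards [eventually_ne_atTop 0] with m hm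
    field_simp

lemma two_mul_sq_add_three_mul_eq_one_of_tendsto {β : ℝ}
    (hb : Tendsto (fun m => (letterCount simO 2 m : ℝ) / m) atTop (𝓝 β)) :
    2 * β ^ 2 + 3 * β = 1 := by
  set g : ℕ → ℕ := fun m => m + letterCount simO 2 m
  have hg : Tendsto g atTop atTop := tendsto_atTop_mono (fun m => Nat.le_add_right _ _) tendsto_id
  have hgm : Tendsto (fun m => (g m : ℝ) / m) atTop (𝓝 (1 + β)) := by
    refine (tendsto_const_nhds.add hb).congr' ?_
    filter_upwards [eventually_ne_atTop 0] with m hm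
    simp only [g]
    push_cast
    field_simp
  have hcomp :
      Tendsto (fun m => (letterCount simO 2 (g m) : ℝ) / m) atTop (𝓝 (β * (1 + β))) := by
    refine ((hb.comp hg).mul hgm).congr' ?_
    filter_upwards [eventually_ne_atTop 0] with m hm
    have : (g m : ℝ) ≠ 0 := Nat.cast_ne_zero.mpr (by simp only [g]; omega)
    simp only [Function.comp_apply]
    field_simp
  have hone : Tendsto (fun m => (2 * letterCount simO 2 (g m) + letterCount simO 2 m : ℝ) / m)
      atTop (𝓝 1) := by
    refine tendsto_div_of_abs_sub_le (y := fun m => (m : ℝ)) (C := 4) ?_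
      (tendsto_const_nhds.congr' ?_)
    · filter_upwards [eventually_ge_atTop 1] with m hm
      obtain ⟨e, he, hid⟩ := letterCount_simO_two_add_self hm
      have he' : (e : ℝ) ≤ 1 := by exact_mod_cast he
      have hid' : 2 * (letterCount simO 2 (g m) : ℝ) + letterCount simO 2 m + e = m + 4 := by
        exact_mod_cast hid
      rw [abs_le]
      constructor <;> linarith [e.cast_nonneg (α := ℝ)]
    · filter_upwards [eventually_ne_atTop 0] with m hm
      field_simp
  have hlim : Tendsto (fun m => (2 * letterCount simO 2 (g m) + letterCount simO 2 m : ℝ) / m)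
      atTop (𝓝 (2 * (β * (1 + β)) + β)) :=
    ((hcomp.const_mul 2).add hb).congr fun m => by ring
  linear_combination tendsto_nhds_unique hlim hone

/-- if the density of 1's in the simultaneously constructed
directing sequence T exists, then neither T nor O_T is eventually periodic. -/
theorem stmt19 (dT : ℝ)
    (hdT : Filter.Tendsto (freqOnes simT) Filter.atTop (nhds dT)) :
    (¬ ∃ P N : ℕ, 1 ≤ P ∧ ∀ n, N ≤ n → simT (n + P) = simT n) ∧
    (¬ ∃ P N : ℕ, 1 ≤ P ∧ ∀ n, N ≤ n → simO (n + P) = simO n) := by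
  have hT : Tendsto (fun m => (letterCount simT 1 m : ℝ) / m) atTop (𝓝 dT) := hdT
  have hO := tendsto_letterCount_simO_two_div hT
  have hirr : Irrational (2 * dT - 1) :=
    irrational_of_two_mul_sq_add_three_mul_eq_one (two_mul_sq_add_three_mul_eq_one_of_tendsto hO)
  refine ⟨fun ⟨P, N, hP, hper⟩ => ?_, fun ⟨P, N, hP, hper⟩ => ?_⟩
  · obtain ⟨q, hq⟩ := exists_rat_eq_of_tendsto_letterCount_div hP hper hT
    exact hirr ⟨2 * q - 1, by push_cast [hq]; rfl⟩
  · exact hirr (exists_rat_eq_of_tendsto_letterCount_div hP hper hO)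
end
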